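/- Let r ∈ ℝ with r ≠ 0, r³ ≠ 1 and 2r³ + 1 ≠ 0. On ℝ⁵ with coordinates (x,y,z,p,q), define x₂ = (3x+p)/4, y₂ = (12^{2/3}/8)·y, z₂ = −(z + p²/6)/4, p₂ = −p/3, q₂ = −(12^{1/3}/6)·q, and define the linear functionals on tangent vectors v = (v_x,v_y,v_z,v_p,v_q): ω₂(v) = v_p + (2/r³ + 1)v_x − (3/r²)v_y, ω₃(v) = v_q − (3/r²)v_x + (6/r)v_y, ω₄(v) = v_y − (1/r)v_x, ϖ(v) = v_z − p·v_x − q·v_y. Then at every point m and for every v: Dz₂(v) − p₂(m)Dx₂(v) − q₂(m)Dy₂(v) = −(1/4)ϖ(v); Dp₂(v) − (2(r³+2)/(3(r³−1)))Dx₂(v) + 12^{1/3}(r/(r³−1))Dy₂(v) = −(r³/(2(r³−1)))ω₂(v); Dq₂(v) + 12^{1/3}(r/(r³−1))Dx₂(v) − 12^{2/3}((4r³−1)/(6r(r³−1)))Dy₂(v) = (12^{1/3}r/(4(r³−1)))ω₂(v) − (12^{1/3}/6)ω₃(v); Dy₂(v) − (12^{2/3}r²/(4r³+2))Dx₂(v)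 = −(12^{2/3}r²/(8(2r³+1)))ω₂(v) + (12^{2/3}(r³−1)/(4(2r³+1)))ω₄(v). -/

import Mathlib

noncomputable section

/-- Points (and tangent vectors) of `ℝ⁵`, coordinates `(x, y, z, p, q)`. -/
abbrev R5 : Type := ℝ × ℝ × ℝ × ℝ × ℝ

namespace Stmt13

/-- First component `x₂ = (3x + p)/4` of the coordinate diffeomorphism. -/
def x₂ (m : R5) : ℝ := (3 * m.1 + m.2.2.2.1) / 4
/-- Second component `y₂ = (12^{2/3}/8)·y`. -/
def y₂ (m : R5) : ℝ := ((12 : ℝ) ^ ((2 : ℝ) / 3) / 8) * m.2.1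
/-- Third component `z₂ = −(z + p²/6)/4`. -/
def z₂ (m : R5) : ℝ := -(m.2.2.1 + m.2.2.2.1 ^ 2 / 6) / 4
/-- Fourth component `p₂ = −p/3`. -/
def p₂ (m : R5) : ℝ := -m.2.2.2.1 / 3
/-- Fifth component `q₂ = −(12^{1/3}/6)·q`. -/
def q₂ (m : R5) : ℝ := -((12 : ℝ) ^ ((1 : ℝ) / 3) / 6) * m.2.2.2.2

/-- The structural 1-form `ω₂ = dp + (2/r³ + 1)dx − (3/r²)dy` evaluated on a tangent
vector. -/
def ω₂ (r : ℝ) (v : R5) : ℝ := v.2.2.2.1 + (2 / r ^ 3 + 1) * v.1 - 3 / r ^ 2 * v.2.1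
/-- The structural 1-form `ω₃ = dq − (3/r²)dx + (6/r)dy` evaluated on a tangent vector. -/
def ω₃ (r : ℝ) (v : R5) : ℝ := v.2.2.2.2 - 3 / r ^ 2 * v.1 + 6 / r * v.2.1
/-- The structural 1-form `ω₄ = dy − (1/r)dx` evaluated on a tangent vector. -/
def ω₄ (r : ℝ) (v : R5) : ℝ := v.2.1 - 1 / r * v.1
/-- The contact form `ϖ = dz − pdx − qdy` evaluated at `m` on a tangent vector. -/
def ϖ (m v : R5) : ℝ := v.2.2.1 - m.2.2.2.1 * v.1 - m.2.2.2.2 * v.2.1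

end Stmt13

open Stmt13

/-! All components of the coordinate change are linear except `z₂`, whose term `-p²/24`
contributes `-(p/12) dp`; this is exactly cancelled by `p₂ dx₂`, which turns `dz₂ - p₂ dx₂ - q₂ dy₂`
into a multiple of the contact form. The other three identities compare 1-forms with constant
coefficients, so they are rational identities in `r` and `c = 12^{1/3}`, true modulo `c³ = 12`
once `12^{2/3}` is written as `c²`. -/

theorem rpow_one_third_pow_three {x : ℝ} (hx : 0 ≤ x) : (x ^ ((1 : ℝ) / 3)) ^ 3 = x := by
  rw [← Real.rpow_natCast, ← Real.rpow_mul hx]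
  norm_num

theorem rpow_two_thirds {x : ℝ} (hx : 0 ≤ x) : x ^ ((2 : ℝ) / 3) = (x ^ ((1 : ℝ) / 3)) ^ 2 := by
  rw [← Real.rpow_natCast, ← Real.rpow_mul hx]
  norm_num

namespace Stmt13

variable (m v : R5)

theorem fderiv_x₂_apply : fderiv ℝ x₂ m v = (3 * v.1 + v.2.2.2.1) / 4 := by
  have h : HasFDerivAt x₂ _ m :=
    (((hasFDerivAt_id (𝕜 := ℝ) m).fst.const_mul 3).add
      (hasFDerivAt_id (𝕜 := ℝ) m).snd.snd.snd.fst).mul_const (4 : ℝ)⁻¹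
  rw [h.fderiv]; simp; ring

theorem fderiv_y₂_apply : fderiv ℝ y₂ m v = (12 : ℝ) ^ ((2 : ℝ) / 3) / 8 * v.2.1 := by
  have h : HasFDerivAt y₂ _ m := (hasFDerivAt_id (𝕜 := ℝ) m).snd.fst.const_mul _
  rw [h.fderiv]; simp

theorem fderiv_z₂_apply :
    fderiv ℝ z₂ m v = -(v.2.2.1 + m.2.2.2.1 * v.2.2.2.1 / 3) / 4 := by
  have h : HasFDerivAt z₂ _ m :=
    (((hasFDerivAt_id (𝕜 := ℝ) m).snd.snd.fst.add
      (((hasFDerivAt_id (𝕜 := ℝ) m).snd.snd.snd.fst.pow 2).mul_const (6 : ℝ)⁻¹)).neg).mul_const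
      (4 : ℝ)⁻¹
  rw [h.fderiv]; simp; ring

theorem fderiv_p₂_apply : fderiv ℝ p₂ m v = -v.2.2.2.1 / 3 := by
  have h : HasFDerivAt p₂ _ m :=
    (hasFDerivAt_id (𝕜 := ℝ) m).snd.snd.snd.fst.neg.mul_const (3 : ℝ)⁻¹
  rw [h.fderiv]; simp; ring

theorem fderiv_q₂_apply : fderiv ℝ q₂ m v = -((12 : ℝ) ^ ((1 : ℝ) / 3) / 6) * v.2.2.2.2 := by
  have h : HasFDerivAt q₂ _ m := (hasFDerivAt_id (𝕜 := ℝ) m).snd.snd.snd.snd.const_mul _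
  rw [h.fderiv]; simp

end Stmt13

/-- The pullback of the (inverted and translated) standard structural 1-forms under the
coordinate diffeomorphism `(x₂,y₂,z₂,p₂,q₂)` lies in the span of `ϖ, ω₂, ω₃, ω₄`, with the
explicit coefficients recovering the parametrized solution
`(12^{2/3}r²/(4r³+2), −2·12^{1/3}r/(2r³+1))` of Noth's equation. -/
theorem recovering_noth_solution_two (r : ℝ) (hr0 : r ≠ 0) (hr1 : r ^ 3 ≠ 1)
    (hr2 : 2 * r ^ 3 + 1 ≠ 0) :
    ∀ m v : R5,
      (fderiv ℝ z₂ m v - p₂ m * fderiv ℝ x₂ m v - q₂ m * fderiv ℝ y₂ m v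
        = -(1 / 4) * ϖ m v)
      ∧ (fderiv ℝ p₂ m v - 2 * (r ^ 3 + 2) / (3 * (r ^ 3 - 1)) * fderiv ℝ x₂ m v
            + (12 : ℝ) ^ ((1 : ℝ) / 3) * (r / (r ^ 3 - 1)) * fderiv ℝ y₂ m v
          = -(r ^ 3 / (2 * (r ^ 3 - 1))) * ω₂ r v)
      ∧ (fderiv ℝ q₂ m v + (12 : ℝ) ^ ((1 : ℝ) / 3) * (r / (r ^ 3 - 1)) * fderiv ℝ x₂ m v
            - (12 : ℝ) ^ ((2 : ℝ) / 3) * ((4 * r ^ 3 - 1) / (6 * r * (r ^ 3 - 1)))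
              * fderiv ℝ y₂ m v
          = ((12 : ℝ) ^ ((1 : ℝ) / 3) * r / (4 * (r ^ 3 - 1))) * ω₂ r v
            - ((12 : ℝ) ^ ((1 : ℝ) / 3) / 6) * ω₃ r v)
      ∧ (fderiv ℝ y₂ m v
            - ((12 : ℝ) ^ ((2 : ℝ) / 3) * r ^ 2 / (4 * r ^ 3 + 2)) * fderiv ℝ x₂ m v
          = -((12 : ℝ) ^ ((2 : ℝ) / 3) * r ^ 2 / (8 * (2 * r ^ 3 + 1))) * ω₂ r v
            + ((12 : ℝ) ^ ((2 : ℝ) / 3) * (r ^ 3 - 1) / (4 * (2 * r ^ 3 + 1))) * ω₄ r v) := by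
  intro m v
  have hr1' : r ^ 3 - 1 ≠ 0 := sub_ne_zero.mpr hr1
  have hr2' : r ^ 3 * 2 + 1 ≠ 0 := by rwa [mul_comm]
  have hc : ((12 : ℝ) ^ ((1 : ℝ) / 3)) ^ 3 = 12 := rpow_one_third_pow_three (by norm_num)
  rw [fderiv_x₂_apply, fderiv_y₂_apply, fderiv_z₂_apply, fderiv_p₂_apply, fderiv_q₂_apply,
    rpow_two_thirds (by norm_num : (0 : ℝ) ≤ 12), show 4 * r ^ 3 + 2 = 2 * (2 * r ^ 3 + 1) by ring]
  set c := (12 : ℝ) ^ ((1 : ℝ) / 3)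
  simp only [ω₂, ω₃, ω₄, ϖ, p₂, q₂]
  refine ⟨?_, ?_, ?_, ?_⟩
  · linear_combination m.2.2.2.2 * v.2.1 / 48 * hc
  · field_simp
    linear_combination 24 * r * v.2.1 * hc
  · field_simp
    linear_combination 4 * c * r * (1 - 4 * r ^ 3) * v.2.1 * hc
  · field_simp
    ring
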